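/- Let C = XᵀX/n have unit diagonal, let β̌ ∈ R^p with |supp(β̌)| ≤ q ≤ p and supp(β̌) ⊆ A₀ (so that Σ_{j∈supp(β̌)} w_j² ≤ Σ_{j∈A₀} w_j²), assume κ(q, 3) > 0, let c > 0, and let u ∈ R^p satisfy |u_j| ≤ w_j λ/2 for all j. Then for any minimizer γ of V(·; β̌, u): |V(γ; β̌, cu) − V(γ; β̌, u)| ≤ 8 w_max |1 − c| · nλ² Σ_{j∈A₀} w_j² / (w_min κ(q,3)²). -/

import Mathlib

open Matrix

/-- The localized Lasso criterion `V(δ; b, u)`, where `C = XᵀX/n`. -/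
noncomputable def Vfun {n p : ℕ} (X : Matrix (Fin n) (Fin p) ℝ) (w : Fin p → ℝ)
    (lam r : ℝ) (b u δ : Fin p → ℝ) : ℝ :=
  (n / (2 * r ^ 2)) * dotProduct δ (((n : ℝ)⁻¹ • (Xᵀ * X)).mulVec δ)
    - (n / r) * dotProduct δ u
    + n * lam * ∑ j, w j * (|b j + δ j / r| - |b j|)

/-!
Replacing `u` by `c • u` changes `V(γ; β̌, ·)` by `(n / r) (1 - c) γ ⬝ᵥ u`, and
`|γ ⬝ᵥ u| ≤ (λ / 2) Σ w_j |γ_j|` by the bound on `u`. Since `β̌ + γ / r` is a Lasso estimate with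
true coefficient `β̌` and noise term `u`, `θ = γ / r` obeys the basic inequality `V(γ) ≤ V(0) = 0`.
It forces `θ` into the cone `Σ_{Acᶜ} w|θ| ≤ 3 Σ_{Ac} w|θ|`, where the restricted eigenvalue
condition and Cauchy–Schwarz give `Σ_{Ac} w|θ| ≤ 3 λ Σ_{Ac} w² / κ²`, hence
`Σ w|θ| ≤ 12 λ Σ_{A₀} w² / κ²`. The constant `8 w_max / w_min ≥ 6` absorbs the rest.
-/

open Finset

section WeightedL1

variable {ι : Type*} [Fintype ι] [DecidableEq ι] {w θ u b : ι → ℝ} {lam : ℝ} {S : Finset ι}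

omit [DecidableEq ι] in
theorem abs_dotProduct_le_sum_mul_abs {v : ι → ℝ} (hu : ∀ j, |u j| ≤ v j) :
    |θ ⬝ᵥ u| ≤ ∑ j, v j * |θ j| :=
  calc |θ ⬝ᵥ u| ≤ ∑ j, |θ j * u j| := abs_sum_le_sum_abs _ _
    _ ≤ ∑ j, v j * |θ j| := sum_le_sum fun j _ => by
        rw [abs_mul, mul_comm]
        exact mul_le_mul_of_nonneg_right (hu j) (abs_nonneg _)

theorem sum_compl_sub_sum_le_sum_mul_abs_add_sub_abs (hw : ∀ j, 0 ≤ w j)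
    (hb : ∀ j ∉ S, b j = 0) :
    ∑ j ∈ Sᶜ, w j * |θ j| - ∑ j ∈ S, w j * |θ j| ≤ ∑ j, w j * (|b j + θ j| - |b j|) := by
  rw [← sum_add_sum_compl S, sub_eq_neg_add, ← sum_neg_distrib]
  refine add_le_add (sum_le_sum fun j _ => ?_) (sum_le_sum fun j hj => ?_)
  · have := abs_add_le (b j + θ j) (-θ j)
    rw [add_neg_cancel_right, abs_neg] at this
    rw [← mul_neg]
    exact mul_le_mul_of_nonneg_left (by linarith) (hw j)
  · simp [hb j (mem_compl.mp hj)]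

theorem add_mul_sum_compl_le_of_basic_inequality (hw : ∀ j, 0 ≤ w j) (hlam : 0 ≤ lam)
    (hb : ∀ j ∉ S, b j = 0) (hu : ∀ j, |u j| ≤ w j * lam / 2) {Q : ℝ}
    (h : Q / 2 - θ ⬝ᵥ u + lam * ∑ j, w j * (|b j + θ j| - |b j|) ≤ 0) :
    Q + lam * ∑ j ∈ Sᶜ, w j * |θ j| ≤ 3 * lam * ∑ j ∈ S, w j * |θ j| := by
  have hdot : θ ⬝ᵥ u ≤ lam / 2 * ∑ j, w j * |θ j| := by
    refine (le_abs_self _).trans ((abs_dotProduct_le_sum_mul_abs hu).trans_eq ?_)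
    rw [mul_sum]
    exact sum_congr rfl fun j _ => by ring
  have hpen := mul_le_mul_of_nonneg_left
    (sum_compl_sub_sum_le_sum_mul_abs_add_sub_abs (θ := θ) hw hb) hlam
  rw [← sum_add_sum_compl S] at hdot
  linarith

theorem sum_mul_abs_le_of_cone (hw : ∀ j, 0 ≤ w j) (hlam : 0 < lam) {κ Q : ℝ} (hκ : 0 < κ)
    (hQ : 0 ≤ Q) (hbasic : Q + lam * ∑ j ∈ Sᶜ, w j * |θ j| ≤ 3 * lam * ∑ j ∈ S, w j * |θ j|)
    (hRE : ∑ j ∈ Sᶜ, w j * |θ j| ≤ 3 * ∑ j ∈ S, w j * |θ j| → κ ^ 2 * ∑ j ∈ S, θ j ^ 2 ≤ Q) :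
    ∑ j, w j * |θ j| ≤ 12 * lam * (∑ j ∈ S, w j ^ 2) / κ ^ 2 := by
  set T := ∑ j ∈ S, w j * |θ j|
  set W := ∑ j ∈ S, w j ^ 2
  have hcone : ∑ j ∈ Sᶜ, w j * |θ j| ≤ 3 * T := le_of_mul_le_mul_left (by linarith) hlam
  have hTc : 0 ≤ ∑ j ∈ Sᶜ, w j * |θ j| := sum_nonneg fun j _ => mul_nonneg (hw j) (abs_nonneg _)
  have hQT : Q ≤ 3 * lam * T := by linarith [mul_nonneg hlam.le hTc]
  have hT : 0 ≤ T := sum_nonneg fun j _ => mul_nonneg (hw j) (abs_nonneg _)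
  have hW : 0 ≤ W := sum_nonneg fun j _ => sq_nonneg _
  have hCS : T ^ 2 ≤ W * ∑ j ∈ S, θ j ^ 2 := by
    simpa only [sq_abs] using sum_mul_sq_le_sq_mul_sq S w fun j => |θ j|
  -- Cauchy–Schwarz and the restricted eigenvalue bound give `κ² T² ≤ 3 λ W T`.
  have hκT : κ ^ 2 * T ≤ 3 * lam * W := by
    rcases hT.eq_or_lt with h0 | hpos
    · rw [← h0, mul_zero]; positivity
    · refine le_of_mul_le_mul_right ?_ hpos
      calc κ ^ 2 * T * T = κ ^ 2 * T ^ 2 := by ring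
        _ ≤ κ ^ 2 * (W * ∑ j ∈ S, θ j ^ 2) := by gcongr
        _ = W * (κ ^ 2 * ∑ j ∈ S, θ j ^ 2) := by ring
        _ ≤ W * Q := by gcongr; exact hRE hcone
        _ ≤ W * (3 * lam * T) := by gcongr
        _ = 3 * lam * W * T := by ring
  rw [← sum_add_sum_compl S, le_div_iff₀ (by positivity)]
  linarith [mul_le_mul_of_nonneg_right hcone (sq_nonneg κ)]

end WeightedL1

theorem dotProduct_smul_gram_mulVec {m ι : Type*} [Fintype m] [Fintype ι]
    (X : Matrix m ι ℝ) (a : ℝ) (θ : ι → ℝ) :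
    θ ⬝ᵥ ((a • (Xᵀ * X)) *ᵥ θ) = a * ∑ i, (X *ᵥ θ) i ^ 2 := by
  rw [smul_mulVec, dotProduct_smul, smul_eq_mul, ← mulVec_mulVec, dotProduct_mulVec,
    vecMul_transpose]
  simp only [dotProduct, sq]

theorem sq_mul_le_of_mul_sqrt_le {κ n s E : ℝ} (hκ : 0 ≤ κ) (hn : 0 < n) (hE : 0 ≤ E)
    (h : κ * √n * √s ≤ √E) : κ ^ 2 * s ≤ n⁻¹ * E := by
  rw [← Real.sqrt_sq hκ, ← Real.sqrt_mul (sq_nonneg κ), ← Real.sqrt_mul (by positivity),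
    Real.sqrt_le_sqrt_iff hE] at h
  rw [le_inv_mul_iff₀ hn]
  linarith

section Vfun

variable {n p : ℕ} (X : Matrix (Fin n) (Fin p) ℝ) (w : Fin p → ℝ) (lam r : ℝ) (b u : Fin p → ℝ)

theorem Vfun_zero : Vfun X w lam r b u 0 = 0 := by
  simp [Vfun]

theorem Vfun_smul_sub (c : ℝ) (δ : Fin p → ℝ) :
    Vfun X w lam r b (c • u) δ - Vfun X w lam r b u δ = n / r * ((1 - c) * (δ ⬝ᵥ u)) := by
  simp only [Vfun, dotProduct_smul, smul_eq_mul]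
  ring

theorem Vfun_smul {r : ℝ} (hr : r ≠ 0) (θ : Fin p → ℝ) :
    Vfun X w lam r b u (r • θ) = n * (θ ⬝ᵥ (((n : ℝ)⁻¹ • (Xᵀ * X)) *ᵥ θ) / 2 - θ ⬝ᵥ u
      + lam * ∑ j, w j * (|b j + θ j| - |b j|)) := by
  simp only [Vfun, mulVec_smul, dotProduct_smul, smul_dotProduct, smul_eq_mul, Pi.smul_apply,
    mul_div_cancel_left₀ _ hr]
  field_simp

end Vfun

theorem sum_mul_abs_div_le_of_forall_Vfun_le {n p : ℕ} (hn : 0 < n) (X : Matrix (Fin n) (Fin p) ℝ)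
    {w : Fin p → ℝ} (hw : ∀ j, 0 ≤ w j) {lam : ℝ} (hlam : 0 < lam) {r : ℝ} (hr : r ≠ 0)
    {b u γ : Fin p → ℝ} {S : Finset (Fin p)} (hb : ∀ j ∉ S, b j = 0)
    (hu : ∀ j, |u j| ≤ w j * lam / 2) {κ : ℝ} (hκ : 0 < κ)
    (hRE : ∀ δ : Fin p → ℝ, δ ≠ 0 → ∑ j ∈ Sᶜ, w j * |δ j| ≤ 3 * ∑ j ∈ S, w j * |δ j| →
      κ * √n * √(∑ j ∈ S, δ j ^ 2) ≤ √(∑ i, (X *ᵥ δ) i ^ 2))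
    (hγ : ∀ δ, Vfun X w lam r b u γ ≤ Vfun X w lam r b u δ) :
    ∑ j, w j * |γ j / r| ≤ 12 * lam * (∑ j ∈ S, w j ^ 2) / κ ^ 2 := by
  set θ : Fin p → ℝ := fun j => γ j / r
  have hγθ : γ = r • θ := funext fun j => (mul_div_cancel₀ (γ j) hr).symm
  have hQ := dotProduct_smul_gram_mulVec X (n : ℝ)⁻¹ θ
  have hbasic : θ ⬝ᵥ (((n : ℝ)⁻¹ • (Xᵀ * X)) *ᵥ θ) / 2 - θ ⬝ᵥ u
      + lam * ∑ j, w j * (|b j + θ j| - |b j|) ≤ 0 := by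
    have h := hγ 0
    rw [Vfun_zero, hγθ, Vfun_smul X w lam b u hr] at h
    exact nonpos_of_mul_nonpos_right h (Nat.cast_pos.mpr hn)
  refine sum_mul_abs_le_of_cone hw hlam hκ (by rw [hQ]; positivity)
    (add_mul_sum_compl_le_of_basic_inequality hw hlam.le hb hu hbasic) fun hcone => ?_
  by_cases hθ : θ = 0
  · simp [show ∀ j, γ j / r = 0 from congrFun hθ, hθ]
  · rw [hQ]
    exact sq_mul_le_of_mul_sqrt_le hκ.le (Nat.cast_pos.mpr hn) (by positivity) (hRE θ hθ hcone)

theorem V_scale_u_bound_general {n p : ℕ}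
    (X : Matrix (Fin n) (Fin p) ℝ) (w : Fin p → ℝ) (hw : ∀ j, 0 < w j)
    (lam : ℝ) (hlam : 0 < lam) (r : ℝ) (hr : 0 < r)
    (wmin wmax : ℝ) (hwmin : IsLeast (Set.range w) wmin)
    (hwmax : IsGreatest (Set.range w) wmax)
    (βc : Fin p → ℝ)
    (A₀ Ac : Finset (Fin p))
    (hAc : ∀ j, j ∈ Ac ↔ βc j ≠ 0) (hsub : Ac ⊆ A₀)
    (q : ℕ) (hcard : Ac.card ≤ q)
    -- Assumption RE(q, 3)
    (κq : ℝ) (hκq : 0 < κq)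
    (hREq : ∀ A : Finset (Fin p), A.card ≤ q → ∀ δ : Fin p → ℝ, δ ≠ 0 →
      (∑ j ∈ Aᶜ, w j * |δ j|) ≤ 3 * ∑ j ∈ A, w j * |δ j| →
      κq * Real.sqrt n * Real.sqrt (∑ j ∈ A, δ j ^ 2) ≤
        Real.sqrt (∑ i, (X.mulVec δ i) ^ 2))
    (c : ℝ)
    (u : Fin p → ℝ) (hu : ∀ j, |u j| ≤ w j * lam / 2)
    (γ : Fin p → ℝ)
    (hγ : ∀ δ, Vfun X w lam r βc u γ ≤ Vfun X w lam r βc u δ) :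
    |Vfun X w lam r βc (c • u) γ - Vfun X w lam r βc u γ| ≤
      8 * wmax * |1 - c| * ((n : ℝ) * lam ^ 2 * ∑ j ∈ A₀, w j ^ 2) /
        (wmin * κq ^ 2) := by
  obtain ⟨j₀, rfl⟩ := hwmin.1
  set W₀ := ∑ j ∈ A₀, w j ^ 2
  set T := ∑ j, w j * |γ j / r|
  have hdot : |γ ⬝ᵥ u| ≤ r * (lam / 2 * T) := by
    refine (abs_dotProduct_le_sum_mul_abs hu).trans_eq ?_
    simp only [T, mul_sum, abs_div, abs_of_pos hr]
    exact sum_congr rfl fun j _ => by field_simp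
  -- For `n = 0` the criterion vanishes identically and `γ` is arbitrary.
  have hT : n * T ≤ n * (12 * lam * W₀ / κq ^ 2) := by
    rcases n.eq_zero_or_pos with rfl | hn
    · simp
    refine mul_le_mul_of_nonneg_left ((sum_mul_abs_div_le_of_forall_Vfun_le hn X
      (fun j => (hw j).le) hlam hr.ne' (fun j hj => not_not.mp (mt (hAc j).mpr hj)) hu hκq
      (hREq Ac hcard) hγ).trans ?_) (Nat.cast_nonneg n)
    gcongr
    exact sum_le_sum_of_subset_of_nonneg hsub fun j _ _ => sq_nonneg _
  have hratio : 6 ≤ 8 * wmax / w j₀ := by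
    rw [le_div_iff₀ (hw j₀)]
    linarith [hwmax.2 ⟨j₀, rfl⟩, hw j₀]
  calc |Vfun X w lam r βc (c • u) γ - Vfun X w lam r βc u γ|
      = n / r * |1 - c| * |γ ⬝ᵥ u| := by
        rw [Vfun_smul_sub, abs_mul, abs_mul, abs_of_nonneg (by positivity), mul_assoc]
    _ ≤ n / r * |1 - c| * (r * (lam / 2 * T)) := by gcongr
    _ = lam / 2 * |1 - c| * (n * T) := by field_simp
    _ ≤ lam / 2 * |1 - c| * (n * (12 * lam * W₀ / κq ^ 2)) := by gcongr
    _ = 6 * (|1 - c| * (n * lam ^ 2 * W₀) / κq ^ 2) := by ring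
    _ ≤ 8 * wmax / w j₀ * (|1 - c| * (n * lam ^ 2 * W₀) / κq ^ 2) := by gcongr
    _ = 8 * wmax * |1 - c| * (n * lam ^ 2 * W₀) / (w j₀ * κq ^ 2) := by
        field_simp

/-- Stability of the minimum value of `V(·; β̌, ·)` under rescaling of `u`:
`|V(γ; β̌, cu) − V(γ; β̌, u)| ≤ 8 w_max |1 − c| nλ² Σ_{A₀} w_j² / (w_min κ(q,3)²)`. -/
theorem V_scale_u_bound {n p : ℕ}
    (X : Matrix (Fin n) (Fin p) ℝ) (w : Fin p → ℝ) (hw : ∀ j, 0 < w j)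
    (lam : ℝ) (hlam : 0 < lam) (r : ℝ) (hr : 0 < r)
    (wmin wmax : ℝ) (hwmin : IsLeast (Set.range w) wmin)
    (hwmax : IsGreatest (Set.range w) wmax)
    (hdiag : ∀ j, ((n : ℝ)⁻¹ • (Xᵀ * X)) j j = 1)
    (β₀ βc : Fin p → ℝ)
    (A₀ Ac : Finset (Fin p)) (hA₀ : ∀ j, j ∈ A₀ ↔ β₀ j ≠ 0)
    (hAc : ∀ j, j ∈ Ac ↔ βc j ≠ 0) (hsub : Ac ⊆ A₀)
    (q : ℕ) (hcard : Ac.card ≤ q) (hqp : q ≤ p)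
    -- Assumption RE(q, 3)
    (κq : ℝ) (hκq : 0 < κq)
    (hREq : ∀ A : Finset (Fin p), A.card ≤ q → ∀ δ : Fin p → ℝ, δ ≠ 0 →
      (∑ j ∈ Aᶜ, w j * |δ j|) ≤ 3 * ∑ j ∈ A, w j * |δ j| →
      κq * Real.sqrt n * Real.sqrt (∑ j ∈ A, δ j ^ 2) ≤
        Real.sqrt (∑ i, (X.mulVec δ i) ^ 2))
    (c : ℝ) (hc : 0 < c)
    (u : Fin p → ℝ) (hu : ∀ j, |u j| ≤ w j * lam / 2)
    (γ : Fin p → ℝ)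
    (hγ : ∀ δ, Vfun X w lam r βc u γ ≤ Vfun X w lam r βc u δ) :
    |Vfun X w lam r βc (c • u) γ - Vfun X w lam r βc u γ| ≤
      8 * wmax * |1 - c| * ((n : ℝ) * lam ^ 2 * ∑ j ∈ A₀, w j ^ 2) /
        (wmin * κq ^ 2) :=
  V_scale_u_bound_general X w hw lam hlam r hr wmin wmax hwmin hwmax βc A₀ Ac hAc hsub q hcard κq
    hκq hREq c u hu γ hγ
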